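/- arXiv:2412.18471 — 3 statements merged into one kernel-verified Lean document; each statement's English description precedes it below -/
import Mathlib

section
/- Fix an integer n ≥ 1 and an n-times differentiable function μ : ℝ → ℝ. For every t ∈ ℝ, the matrix identity T_n(μ^{(1)}(t)) + T_n(μ(t))·A = A·T_n(μ(t)) + B_α(t)·e_1ᵀ holds, where T_n(μ^{(1)}(t)) denotes the matrix obtained from T_n by shifting all derivative orders up by one (its (j,k) entry is α_{j,j−k} μ^{(j−k+1)}(t) for k ≤ j and 0 otherwise). -/
open Matrix

/-- The coefficients `α_{j,i}` (`j` is 1-based) for fixed order `n`, defined by the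
recursion `α_{j,0} = 1`, `α_{n,i} = (-1)^i`, `α_{j,i} = α_{j+1,i} - α_{j,i-1}`. -/
def alphaCoef (n : ℕ) (j i : ℕ) : ℤ :=
  if n ≤ j then (-1) ^ i
  else if i = 0 then 1
  else alphaCoef n (j + 1) i - alphaCoef n j (i - 1)
termination_by (n - j, i)
decreasing_by
  · apply Prod.Lex.left; omega
  · apply Prod.Lex.right' <;> omega

/-- The modulating-function-based transformation matrix `T_n(μ(t))`, whose (1-based)
`(j,k)` entry is `α_{j,j-k} μ^{(j-k)}(t)` for `k ≤ j` and `0` otherwise. -/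
noncomputable def Tmat (n : ℕ) (μ : ℝ → ℝ) (t : ℝ) : Matrix (Fin n) (Fin n) ℝ :=
  Matrix.of fun j k : Fin n =>
    if (k : ℕ) ≤ (j : ℕ) then
      (alphaCoef n ((j : ℕ) + 1) ((j : ℕ) - (k : ℕ)) : ℝ) * iteratedDeriv ((j : ℕ) - (k : ℕ)) μ t
    else 0

/-- `T_n(μ^{(1)}(t))`: the matrix obtained from `T_n` by shifting all derivative
orders up by one; its (1-based) `(j,k)` entry is `α_{j,j-k} μ^{(j-k+1)}(t)` for `k ≤ j`. -/
noncomputable def TmatShift (n : ℕ) (μ : ℝ → ℝ) (t : ℝ) : Matrix (Fin n) (Fin n) ℝ :=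
  Matrix.of fun j k : Fin n =>
    if (k : ℕ) ≤ (j : ℕ) then
      (alphaCoef n ((j : ℕ) + 1) ((j : ℕ) - (k : ℕ)) : ℝ) * iteratedDeriv ((j : ℕ) - (k : ℕ) + 1) μ t
    else 0

/-- The Brunovsky (nilpotent shift) matrix `A`: ones on the superdiagonal, zeros elsewhere. -/
def Amat (n : ℕ) : Matrix (Fin n) (Fin n) ℝ :=
  Matrix.of fun j k : Fin n => if (k : ℕ) = (j : ℕ) + 1 then 1 else 0

/-- First standard basis vector `e₁` of `ℝⁿ`. -/
def e1vec (n : ℕ) : Fin n → ℝ := fun k => if (k : ℕ) = 0 then 1 else 0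

/-- Last standard basis vector `B₀ = (0,…,0,1)ᵀ` of `ℝⁿ`. -/
def B0vec (n : ℕ) : Fin n → ℝ := fun k => if (k : ℕ) = n - 1 then 1 else 0

/-- The vector `B_α(t)` whose (1-based) `j`-th entry is `(-1)^(j-1) C(n,j) μ^{(j)}(t)`. -/
noncomputable def Balpha (n : ℕ) (μ : ℝ → ℝ) (t : ℝ) : Fin n → ℝ :=
  fun j => (-1 : ℝ) ^ (j : ℕ) * (n.choose ((j : ℕ) + 1)) * iteratedDeriv ((j : ℕ) + 1) μ t

/-!
Entrywise, every term of the identity carries the same derivative `μ^{(i)}(t)`, and the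
coefficients satisfy exactly the defining recursion `α_{j,i-1} + α_{j,i} = α_{j+1,i}`. On the
boundary, the last row uses `α_{n,i} = (-1)^i`, and the first column needs the value
`α_{j,j} = (-1)^j C(n,j)` just outside the paper's index range (the recursion still defines it),
which is read off the closed form `α_{j,i} = (-1)^i C(n-j+i, i)`.
-/

lemma alphaCoef_of_le {n j : ℕ} (h : n ≤ j) (i : ℕ) : alphaCoef n j i = (-1) ^ i := by
  rw [alphaCoef, if_pos h]

lemma alphaCoef_zero_right (n j : ℕ) : alphaCoef n j 0 = 1 := by
  rw [alphaCoef]; simp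

lemma alphaCoef_succ_right {n j : ℕ} (h : j < n) (i : ℕ) :
    alphaCoef n j (i + 1) = alphaCoef n (j + 1) (i + 1) - alphaCoef n j i := by
  rw [alphaCoef, if_neg (by omega), if_neg (by omega), Nat.add_sub_cancel]

lemma alphaCoef_eq_neg_one_pow_mul_choose {n j : ℕ} (h : j ≤ n) (i : ℕ) :
    alphaCoef n j i = (-1) ^ i * ((n - j + i).choose i : ℤ) := by
  induction hd : n - j generalizing j i with
  | zero => simp [alphaCoef_of_le (show n ≤ j by omega)]
  | succ d ihd =>
    induction i with
    | zero => simp [alphaCoef_zero_right]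
    | succ i ihi =>
      rw [alphaCoef_succ_right (by omega), ihd (by omega) _ (by omega), ihi,
        show d + (i + 1) = d + 1 + i by omega,
        show d + 1 + (i + 1) = d + 1 + i + 1 by omega, Nat.choose_succ_succ]
      push_cast
      ring

lemma alphaCoef_self {n j : ℕ} (h : j ≤ n) : alphaCoef n j j = (-1) ^ j * (n.choose j : ℤ) := by
  rw [alphaCoef_eq_neg_one_pow_mul_choose h, Nat.sub_add_cancel h]

lemma alphaCoef_succ_pred {n j : ℕ} (h : j + 1 < n) :
    alphaCoef n (j + 1) j = alphaCoef n (j + 2) (j + 1) + (-1) ^ j * (n.choose (j + 1) : ℤ) := by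
  have := alphaCoef_succ_right h j
  rw [alphaCoef_self h.le, pow_succ] at this
  linarith

section Brunovsky

variable {m : ℕ} (M : Matrix (Fin (m + 1)) (Fin (m + 1)) ℝ)

lemma mul_Amat_apply_zero (j : Fin (m + 1)) : (M * Amat (m + 1)) j 0 = 0 := by
  simp [mul_apply, Amat]

lemma mul_Amat_apply_succ (j : Fin (m + 1)) (k : Fin m) :
    (M * Amat (m + 1)) j k.succ = M j k.castSucc := by
  rw [mul_apply, Fintype.sum_eq_single k.castSucc fun l hl => ?_]
  · simp [Amat]
  · simp [Amat, Fin.ext_iff] at hl ⊢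
    omega

lemma Amat_mul_apply_last (k : Fin (m + 1)) : (Amat (m + 1) * M) (Fin.last m) k = 0 := by
  simp [mul_apply, Amat, (Fin.is_lt _).ne]

lemma Amat_mul_apply_castSucc (j : Fin m) (k : Fin (m + 1)) :
    (Amat (m + 1) * M) j.castSucc k = M j.succ k := by
  rw [mul_apply, Fintype.sum_eq_single j.succ fun l hl => ?_]
  · simp [Amat]
  · simp [Amat, Fin.ext_iff] at hl ⊢
    omega

end Brunovsky

section Entries

variable {m : ℕ} (μ : ℝ → ℝ) (t : ℝ)

lemma TmatShift_apply_zero (j : Fin (m + 1)) :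
    TmatShift (m + 1) μ t j 0 = (Amat (m + 1) * Tmat (m + 1) μ t) j 0 + Balpha (m + 1) μ t j := by
  induction j using Fin.lastCases with
  | last => simp [Amat_mul_apply_last, TmatShift, Balpha, alphaCoef_of_le]
  | cast j =>
    simp [Amat_mul_apply_castSucc, TmatShift, Tmat, Balpha,
      alphaCoef_succ_pred (Nat.succ_lt_succ j.isLt)]
    ring

lemma TmatShift_apply_succ_add (j : Fin (m + 1)) (k : Fin m) :
    TmatShift (m + 1) μ t j k.succ + Tmat (m + 1) μ t j k.castSucc
      = (Amat (m + 1) * Tmat (m + 1) μ t) j k.succ := by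
  simp only [TmatShift, Tmat, of_apply, Fin.val_succ, Fin.val_castSucc]
  induction j using Fin.lastCases with
  | last =>
    obtain ⟨i, hi⟩ : ∃ i, m - k = i + 1 := ⟨m - k - 1, by omega⟩
    simp [Amat_mul_apply_last, alphaCoef_of_le, hi, show m - (k + 1) = i by omega, pow_succ]
  | cast j =>
    simp only [Amat_mul_apply_castSucc, of_apply, Fin.val_succ, Fin.val_castSucc]
    rcases lt_trichotomy k j with hkj | rfl | hjk
    · obtain ⟨i, hi⟩ : ∃ i : ℕ, (j : ℕ) - k = i + 1 := ⟨j - k - 1, by omega⟩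
      rw [if_pos (by omega), if_pos (by omega), if_pos (by omega),
        show (j : ℕ) - (k + 1) = i by omega, show (j : ℕ) + 1 - (k + 1) = i + 1 by omega, hi,
        alphaCoef_succ_right (by omega) i]
      push_cast
      ring
    · simp [alphaCoef_zero_right]
    · rw [if_neg (by omega), if_neg (by omega), if_neg (by omega)]
      simp

end Entries

theorem Tmat_shift_add_mul_brunovsky_general (n : ℕ) (μ : ℝ → ℝ) (t : ℝ) :
    TmatShift n μ t + Tmat n μ t * Amat n
      = Amat n * Tmat n μ t + vecMulVec (Balpha n μ t) (e1vec n) := by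
  ext j k
  obtain ⟨m, rfl⟩ : ∃ m, n = m + 1 := ⟨n - 1, by have := j.pos; omega⟩
  simp only [Matrix.add_apply, vecMulVec_apply, e1vec]
  induction k using Fin.cases with
  | zero => simp [mul_Amat_apply_zero, TmatShift_apply_zero]
  | succ k => simp [mul_Amat_apply_succ, TmatShift_apply_succ_add]

/-- for `n ≥ 1` and an `n`-times differentiable `μ`, for every `t`,
`T_n(μ^{(1)}(t)) + T_n(μ(t))·A = A·T_n(μ(t)) + B_α(t)·e₁ᵀ`. -/
theorem Tmat_shift_add_mul_brunovsky (n : ℕ) (hn : 1 ≤ n) (μ : ℝ → ℝ)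
    (hμ : ContDiff ℝ n μ) (t : ℝ) :
    TmatShift n μ t + Tmat n μ t * Amat n
      = Amat n * Tmat n μ t + vecMulVec (Balpha n μ t) (e1vec n) :=
  Tmat_shift_add_mul_brunovsky_general n μ t
end

section
/- Fix an integer n ≥ 1 and an n-times differentiable function μ : ℝ → ℝ. For every t with μ(t) ≠ 0, the matrix T_n(μ(t)) is invertible and G_n(μ(t)) := (T_n(μ^{(1)}(t)) + T_n(μ(t))·A)·T_n(μ(t))^{−1} equals A + μ(t)^{−1} B_α(t) e_1ᵀ; explicitly, G_n(μ(t)) is the matrix whose first column has j-th entry (−1)^{j−1} binom(n,j) μ^{(j)}(t)/μ(t), whose superdiagonal entries are all 1, and whose remaining entries are 0. (Here T_n(μ^{(1)}(t)) is obtained from T_n by shifting all derivative orders up by one.) -/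
open Matrix

/-! The closed form `α_{j,i} = (-1)^i C(n - j + i, i)` turns `T_n` into the matrix with entries
`(-1)^(j-k) C(n-1-k, j-k) μ^{(j-k)}` (0-based). Pascal's rule then gives, entrywise,
`T_n(μ^{(1)}) + T_n(μ) A = (A + μ⁻¹ B_α e₁ᵀ) T_n(μ)`; since `T_n(μ)` is lower triangular with
diagonal `μ`, it is invertible when `μ ≠ 0`, and multiplying by its inverse gives the claim. -/

lemma alphaCoef_eq (n j i : ℕ) : alphaCoef n j i = (-1) ^ i * ((n - j + i).choose i : ℤ) := by
  induction j, i using alphaCoef.induct n with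
  | case1 j i h =>
    rw [alphaCoef, if_pos h, Nat.sub_eq_zero_of_le h]
    simp
  | case2 j h =>
    rw [alphaCoef, if_neg h, if_pos rfl]
    simp
  | case3 j i h h0 ih1 ih2 =>
    obtain ⟨m, rfl⟩ := Nat.exists_eq_succ_of_ne_zero h0
    rw [alphaCoef, if_neg h, if_neg h0, ih1, ih2,
      show n - (j + 1) + (m + 1) = n - j + m by omega,
      show n - j + (m + 1 - 1) = n - j + m by omega,
      show n - j + (m + 1) = n - j + m + 1 by omega, Nat.choose_succ_succ]
    push_cast [pow_succ]
    ring

lemma alphaCoef_succ_sub {n j k : ℕ} (hj : j < n) (hkj : k ≤ j) :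
    (alphaCoef n (j + 1) (j - k) : ℝ) = (-1) ^ (j - k) * ((n - 1 - k).choose (j - k) : ℝ) := by
  rw [alphaCoef_eq, show n - (j + 1) + (j - k) = n - 1 - k by omega]
  push_cast
  rfl

/-- The 0-based `(j, k)` entry of `T_n`, with `f i` in place of `μ^{(i)}(t)`. -/
def lowerEntry (n : ℕ) (f : ℕ → ℝ) (j k : ℕ) : ℝ :=
  if k ≤ j then (-1) ^ (j - k) * ((n - 1 - k).choose (j - k) : ℝ) * f (j - k) else 0

section lowerEntry

variable {n : ℕ} (f : ℕ → ℝ) {j k : ℕ}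

lemma lowerEntry_self : lowerEntry n f k k = f 0 := by
  simp [lowerEntry]

lemma lowerEntry_zero_left (hk : k ≠ 0) : lowerEntry n f 0 k = 0 := by
  simp [lowerEntry, hk]

-- `T_n` has no row `n`, but the formula vanishes there: `C(n-1-k, n-k) = 0`.
lemma lowerEntry_row_eq_zero (hk : k < n) : lowerEntry n f n k = 0 := by
  simp [lowerEntry, hk.le, Nat.choose_eq_zero_of_lt (by omega : n - 1 - k < n - k)]

lemma lowerEntry_succ_add (hk : 0 < k) (hkn : k < n) :
    lowerEntry n (fun i => f (i + 1)) j k + lowerEntry n f j (k - 1)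
      = lowerEntry n f (j + 1) k := by
  unfold lowerEntry
  rcases lt_trichotomy k (j + 1) with hkj | rfl | hkj
  · rw [if_pos (by omega), if_pos (by omega), if_pos (by omega),
      show j - (k - 1) = j - k + 1 by omega, show j + 1 - k = j - k + 1 by omega,
      show n - 1 - (k - 1) = n - 1 - k + 1 by omega, Nat.choose_succ_succ]
    push_cast [pow_succ]
    ring
  · simp
  · rw [if_neg (by omega), if_neg (by omega), if_neg (by omega), add_zero]

lemma lowerEntry_succ_zero (hn : 0 < n) :
    lowerEntry n (fun i => f (i + 1)) j 0
      = lowerEntry n f (j + 1) 0 + (-1) ^ j * (n.choose (j + 1) : ℝ) * f (j + 1) := by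
  obtain ⟨m, rfl⟩ := Nat.exists_eq_add_of_lt hn
  simp only [lowerEntry, zero_le, if_true, Nat.sub_zero, zero_add, Nat.add_sub_cancel,
    Nat.choose_succ_succ', pow_succ]
  push_cast
  ring

end lowerEntry

lemma Tmat_eq (n : ℕ) (μ : ℝ → ℝ) (t : ℝ) :
    Tmat n μ t = of fun j k : Fin n => lowerEntry n (fun i => iteratedDeriv i μ t) j k := by
  ext j k
  simp only [Tmat, lowerEntry, of_apply]
  split_ifs with hkj
  · rw [alphaCoef_succ_sub j.isLt hkj]
  · rfl

lemma TmatShift_eq (n : ℕ) (μ : ℝ → ℝ) (t : ℝ) :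
    TmatShift n μ t
      = of fun j k : Fin n => lowerEntry n (fun i => iteratedDeriv (i + 1) μ t) j k := by
  ext j k
  simp only [TmatShift, lowerEntry, of_apply]
  split_ifs with hkj
  · rw [alphaCoef_succ_sub j.isLt hkj]
  · rfl

section ShiftProducts

variable {n : ℕ} (g : ℕ → ℕ → ℝ) (j k : Fin n)

lemma of_mul_Amat_apply :
    ((of fun j k : Fin n => g j k) * Amat n) j k = if 0 < (k : ℕ) then g j (k - 1) else 0 := by
  rw [mul_apply]
  split_ifs with hk
  · rw [Finset.sum_eq_single ⟨k - 1, by omega⟩ (fun b _ hb => by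
      have : (k : ℕ) ≠ b + 1 := fun h => hb (Fin.ext (by simp only; omega))
      simp [Amat, this]) (by simp)]
    have : (k : ℕ) = k - 1 + 1 := by omega
    simp only [Amat, of_apply, if_pos this, mul_one]
  · exact Finset.sum_eq_zero fun b _ => by simp [Amat, show (k : ℕ) ≠ b + 1 by omega]

lemma Amat_mul_of_apply :
    (Amat n * of fun j k : Fin n => g j k) j k = if (j : ℕ) + 1 < n then g (j + 1) k else 0 := by
  rw [mul_apply]
  split_ifs with hj
  · rw [Finset.sum_eq_single ⟨j + 1, hj⟩ (fun b _ hb => by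
      simp [Amat, show (b : ℕ) ≠ j + 1 from fun h => hb (Fin.ext h)]) (by simp)]
    simp [Amat]
  · exact Finset.sum_eq_zero fun b _ => by simp [Amat, show (b : ℕ) ≠ j + 1 by omega]

lemma vecMulVec_e1vec_mul_of_apply (v : Fin n → ℝ) :
    (vecMulVec v (e1vec n) * of fun j k : Fin n => g j k) j k = v j * g 0 k := by
  rw [mul_apply, Finset.sum_eq_single ⟨0, j.pos⟩ (fun b _ hb => by
    simp [vecMulVec, e1vec, show (b : ℕ) ≠ 0 from fun h => hb (Fin.ext h)]) (by simp)]
  simp [vecMulVec, e1vec]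

end ShiftProducts

lemma Tmat_det (n : ℕ) (μ : ℝ → ℝ) (t : ℝ) : (Tmat n μ t).det = μ t ^ n := by
  rw [det_of_isLowerTriangular _ fun j k (hjk : j < k) => by
    simp [Tmat, not_le.mpr hjk]]
  simp [Tmat, alphaCoef_eq]

lemma TmatShift_add_Tmat_mul_Amat (n : ℕ) (μ : ℝ → ℝ) (t : ℝ) (hμt : μ t ≠ 0) :
    TmatShift n μ t + Tmat n μ t * Amat n
      = (Amat n + (μ t)⁻¹ • vecMulVec (Balpha n μ t) (e1vec n)) * Tmat n μ t := by
  ext j k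
  have hrow : ∀ f : ℕ → ℝ, (if (j : ℕ) + 1 < n then lowerEntry n f (j + 1) k else 0)
      = lowerEntry n f (j + 1) k := fun f => by
    split_ifs with hj
    · rfl
    · rw [show (j : ℕ) + 1 = n by omega, lowerEntry_row_eq_zero f k.isLt]
  rw [add_mul, Matrix.add_apply, Matrix.add_apply, Matrix.smul_mul, Matrix.smul_apply,
    smul_eq_mul, TmatShift_eq, Tmat_eq, of_mul_Amat_apply, Amat_mul_of_apply,
    vecMulVec_e1vec_mul_of_apply, hrow, of_apply]
  set f : ℕ → ℝ := fun i => iteratedDeriv i μ t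
  by_cases hk : (k : ℕ) = 0
  · rw [hk, lowerEntry_succ_zero f j.pos, if_neg (lt_irrefl 0), lowerEntry_self, add_zero, Balpha]
    simp only [f, iteratedDeriv_zero]
    field_simp
  · rw [if_pos (Nat.pos_of_ne_zero hk), lowerEntry_zero_left _ hk, mul_zero, mul_zero, add_zero,
      lowerEntry_succ_add f (Nat.pos_of_ne_zero hk) k.isLt]

theorem Gmat_eq_general (n : ℕ) (μ : ℝ → ℝ) (t : ℝ)
    (hμt : μ t ≠ 0) :
    IsUnit (Tmat n μ t) ∧
    (TmatShift n μ t + Tmat n μ t * Amat n) * (Tmat n μ t)⁻¹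
      = Amat n + (μ t)⁻¹ • vecMulVec (Balpha n μ t) (e1vec n) ∧
    (TmatShift n μ t + Tmat n μ t * Amat n) * (Tmat n μ t)⁻¹
      = Matrix.of fun j k : Fin n =>
          if (k : ℕ) = 0 then
            (-1 : ℝ) ^ (j : ℕ) * (n.choose ((j : ℕ) + 1)) * iteratedDeriv ((j : ℕ) + 1) μ t / μ t
          else if (k : ℕ) = (j : ℕ) + 1 then 1
          else 0 := by
  have hdet : IsUnit (Tmat n μ t).det := by
    rw [Tmat_det]
    exact (pow_ne_zero n hμt).isUnit
  have hG : (TmatShift n μ t + Tmat n μ t * Amat n) * (Tmat n μ t)⁻¹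
      = Amat n + (μ t)⁻¹ • vecMulVec (Balpha n μ t) (e1vec n) := by
    rw [TmatShift_add_Tmat_mul_Amat n μ t hμt, Matrix.mul_assoc, mul_nonsing_inv _ hdet, mul_one]
  refine ⟨(isUnit_iff_isUnit_det _).2 hdet, hG, hG.trans ?_⟩
  ext j k
  by_cases hk : (k : ℕ) = 0
  · simp [Amat, Balpha, e1vec, vecMulVec_apply, hk, div_eq_inv_mul]
  · simp [Amat, e1vec, vecMulVec_apply, hk]

/-- for `n ≥ 1`, `μ` `n`-times differentiable and `μ(t) ≠ 0`, `T_n(μ(t))`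
is invertible and `G_n(μ(t)) = (T_n(μ^{(1)}(t)) + T_n(μ(t))A) T_n(μ(t))⁻¹` equals
`A + μ(t)⁻¹ B_α(t) e₁ᵀ`, i.e. explicitly the matrix with first column entries
`(-1)^(j-1) C(n,j) μ^{(j)}(t)/μ(t)`, superdiagonal entries `1`, and zeros elsewhere. -/
theorem Gmat_eq (n : ℕ) (hn : 1 ≤ n) (μ : ℝ → ℝ) (hμ : ContDiff ℝ n μ) (t : ℝ)
    (hμt : μ t ≠ 0) :
    IsUnit (Tmat n μ t) ∧
    (TmatShift n μ t + Tmat n μ t * Amat n) * (Tmat n μ t)⁻¹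
      = Amat n + (μ t)⁻¹ • vecMulVec (Balpha n μ t) (e1vec n) ∧
    (TmatShift n μ t + Tmat n μ t * Amat n) * (Tmat n μ t)⁻¹
      = Matrix.of fun j k : Fin n =>
          if (k : ℕ) = 0 then
            (-1 : ℝ) ^ (j : ℕ) * (n.choose ((j : ℕ) + 1)) * iteratedDeriv ((j : ℕ) + 1) μ t / μ t
          else if (k : ℕ) = (j : ℕ) + 1 then 1
          else 0 :=
  Gmat_eq_general n μ t hμt
end

section
/- Fix an integer n ≥ 1. Denoting by α^{(n)}_{j,i} the coefficients of order n and by α^{(n+1)}_{j,i} those of order n+1, one has α^{(n+1)}_{j+1,i} = α^{(n)}_{j,i} for all 1 ≤ j ≤ n and 0 ≤ i ≤ j−1. Consequently, in passing from T_n to T_{n+1} only the coefficients of the first column (the α^{(n+1)}_{j,j−1}) are new, while all other coefficients agree with those of T_n. -/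
open Matrix

/-- The recursion defining `alphaCoef n j i` depends on `n` and `j` only through `n - j`. -/
theorem alphaCoef_add_add (n k j i : ℕ) : alphaCoef (n + k) (j + k) i = alphaCoef n j i := by
  fun_induction alphaCoef n j i with
  | case1 j i hle => rw [alphaCoef, if_pos (by omega)]
  | case2 j hlt => rw [alphaCoef, if_neg (by omega), if_pos rfl]
  | case3 j i hlt hi ih_row ih_col =>
    rw [alphaCoef, if_neg (by omega), if_neg hi, ← ih_col, Nat.add_right_comm, ih_row]

theorem alphaCoef_succ_order_general (n : ℕ) :
    ∀ j i : ℕ, 1 ≤ j → j ≤ n → i ≤ j - 1 →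
      alphaCoef (n + 1) (j + 1) i = alphaCoef n j i :=
  fun j i _ _ _ => alphaCoef_add_add n 1 j i

/-- the coefficients of order `n+1` satisfy `α^{(n+1)}_{j+1,i} = α^{(n)}_{j,i}`
for all `1 ≤ j ≤ n`, `0 ≤ i ≤ j-1`: passing from `T_n` to `T_{n+1}`, only the first-column
coefficients `α^{(n+1)}_{j,j-1}` are new, all other coefficients agree with those of `T_n`. -/
theorem alphaCoef_succ_order (n : ℕ) (hn : 1 ≤ n) :
    ∀ j i : ℕ, 1 ≤ j → j ≤ n → i ≤ j - 1 →
      alphaCoef (n + 1) (j + 1) i = alphaCoef n j i :=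
  alphaCoef_succ_order_general n
end
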